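/- Let u_1,…,u_n be the standard basis of ℂⁿ, F_• the standard flag with F_q = span(u_{n−q+1},…,u_n), and E_• the opposite flag with E_q = span(u_1,…,u_q). For w ∈ S_n define X_w = { complete flags V_• in ℂⁿ : dim(V_p ∩ F_q) ≥ #{i ≤ p : w(i) ≤ q} for all 1 ≤ p, q ≤ n }, and Y_w = { complete flags V_• : dim(V_p ∩ E_q) ≥ #{i ≤ p : (w_0 w)(i) ≤ q} for all p, q }, where w_0 ∈ S_n is the permutation w_0(i) = n+1−i. Then for w, v ∈ S_n: (a) if inv(w) = inv(v) and w ≠ v then X_w ∩ Y_v = ∅; (b) X_w ∩ Y_w contains exactly one flag; (c) if inv(w) < inv(v) then X_w ∩ Y_v = ∅. -/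

import Mathlib

/-!
If `V_•` lies in `X_w ∩ Y_v`, then `F_q ∩ E_{n-q} = 0` gives
`dim(V_p ∩ F_q) + dim(V_p ∩ E_{n-q}) ≤ p`, and the defining bounds turn this into the entrywise
inequality `r_w ≤ r_v` of rank matrices `r_w(p, q) = #{i ≤ p : w(i) ≤ q}`, i.e. `v ≤ w` in the
Bruhat order. If moreover `v ≠ w`, let `a` be the first position where they differ; then
`v(a) < w(a)`, and swapping `a` with the first later position `b` where `w` takes a value in
`[v(a), w(a))` removes an inversion of `w` while keeping `v ≤ w (a b)`. By induction
`inv(v) < inv(w)`, which gives (a) and (c).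

For `v = w` the same count shows that `V_p ∩ F_{w(i)} ∩ E_{n+1-w(i)} ≠ 0` for `i ≤ p`, so
`V_p` contains the basis vectors `u_{n+1-w(i)}`, `i ≤ p`, and is spanned by them.
-/

/-- The standard basis vector `u_j` of `ℂⁿ` (0-based). -/
noncomputable def stdBasisVec (n : ℕ) (j : Fin n) : Fin n → ℂ := Pi.single j 1

/-- The standard flag: `F q = span(u_{n-q+1}, …, u_n)` (1-based). -/
noncomputable def stdFlag (n q : ℕ) : Submodule ℂ (Fin n → ℂ) :=
  Submodule.span ℂ (stdBasisVec n '' {j : Fin n | n - q ≤ j.val})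

/-- The opposite flag: `E q = span(u_1, …, u_q)` (1-based). -/
noncomputable def oppFlag (n q : ℕ) : Submodule ℂ (Fin n → ℂ) :=
  Submodule.span ℂ (stdBasisVec n '' {j : Fin n | j.val < q})

/-- A complete flag in `ℂⁿ` (for definiteness, `V p = ⊤` for `p ≥ n`). -/
def IsCompleteFlag (n : ℕ) (V : ℕ → Submodule ℂ (Fin n → ℂ)) : Prop :=
  Monotone V ∧ (∀ p, p ≤ n → Module.finrank ℂ (V p) = p) ∧ ∀ p, n ≤ p → V p = ⊤

/-- The inversion number of `w`: `#{(i,j) : i < j, w(i) > w(j)}`. -/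
def invCount (n : ℕ) (w : Equiv.Perm (Fin n)) : ℕ :=
  (Finset.univ.filter fun p : Fin n × Fin n => p.1 < p.2 ∧ w p.2 < w p.1).card

/-- `#{i ≤ p : w(i) ≤ q}` in 1-based terms, for `w ∈ S_n` (0-based: `i.val < p` and
`(w i).val < q`). -/
def rankBound (n : ℕ) (w : Equiv.Perm (Fin n)) (p q : ℕ) : ℕ :=
  (Finset.univ.filter fun i : Fin n => i.val < p ∧ (w i).val < q).card

/-- The Schubert variety `X_w`: complete flags `V_•` with
`dim(V_p ∩ F_q) ≥ #{i ≤ p : w(i) ≤ q}` for all `p, q`, where `F_•` is the standard flag. -/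
def inSchubX (n : ℕ) (w : Equiv.Perm (Fin n)) (V : ℕ → Submodule ℂ (Fin n → ℂ)) : Prop :=
  ∀ p q, p ≤ n → q ≤ n →
    rankBound n w p q ≤ Module.finrank ℂ ↥(V p ⊓ stdFlag n q)

/-- The dual Schubert variety `Y_w`: complete flags `V_•` with
`dim(V_p ∩ E_q) ≥ #{i ≤ p : (w₀w)(i) ≤ q}` for all `p, q`, where `E_•` is the opposite flag
and `w₀(i) = n + 1 - i`; in 0-based terms `(w₀w)(i) = n - 1 - w(i)`. -/
def inSchubY (n : ℕ) (w : Equiv.Perm (Fin n)) (V : ℕ → Submodule ℂ (Fin n → ℂ)) : Prop :=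
  ∀ p q, p ≤ n → q ≤ n →
    (Finset.univ.filter fun i : Fin n => i.val < p ∧ n - 1 - (w i).val < q).card ≤
      Module.finrank ℂ ↥(V p ⊓ oppFlag n q)

open Finset Equiv

section CoordSpan

variable (K : Type*) {ι : Type*} [Field K] [DecidableEq ι]

noncomputable def coordSpan (S : Set ι) : Submodule K (ι → K) :=
  Submodule.span K ((fun j => Pi.single j 1) '' S)

variable {K}

theorem coordSpan_eq_span_basisFun [Finite ι] (S : Set ι) :
    coordSpan K S = Submodule.span K (Pi.basisFun K ι '' S) := by
  simp only [coordSpan, Pi.basisFun_apply]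

theorem mem_coordSpan [Finite ι] {S : Set ι} {x : ι → K} :
    x ∈ coordSpan K S ↔ ∀ j ∉ S, x j = 0 := by
  rw [coordSpan_eq_span_basisFun, Module.Basis.mem_span_image, Set.subset_def]
  simp only [Finset.mem_coe, Finsupp.mem_support_iff, Pi.basisFun_repr]
  exact forall_congr' fun j => not_imp_comm

theorem coordSpan_inf [Finite ι] (S T : Set ι) :
    coordSpan K S ⊓ coordSpan K T = coordSpan K (S ∩ T) := by
  ext x
  simp only [Submodule.mem_inf, mem_coordSpan, Set.mem_inter_iff, not_and_or]
  grind

theorem coordSpan_mono {S T : Set ι} (h : S ⊆ T) : coordSpan K S ≤ coordSpan K T :=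
  Submodule.span_mono (Set.image_mono h)

theorem coordSpan_univ [Finite ι] : coordSpan K (Set.univ : Set ι) = ⊤ := by
  ext
  simp [mem_coordSpan]

theorem coordSpan_empty : coordSpan K (∅ : Set ι) = ⊥ := by
  simp [coordSpan]

theorem coordSpan_singleton (j : ι) : coordSpan K {j} = K ∙ Pi.single j 1 := by
  simp [coordSpan]

theorem finrank_coordSpan [Finite ι] (S : Finset ι) :
    Module.finrank K (coordSpan K (S : Set ι)) = #S := by
  have hli : LinearIndependent K fun j : (S : Set ι) => Pi.basisFun K ι j :=
    (Pi.basisFun K ι).linearIndependent.comp _ Subtype.coe_injective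
  rw [coordSpan_eq_span_basisFun, Set.image_eq_range, finrank_span_eq_card hli]
  simp

end CoordSpan

section Rank

variable {n : ℕ} (w : Perm (Fin n))

theorem rankBound_congr {v : Perm (Fin n)} {p : ℕ} (h : ∀ i : Fin n, i.val < p → w i = v i)
    (q : ℕ) : rankBound n w p q = rankBound n v p q := by
  unfold rankBound
  congr 1
  exact filter_congr fun i _ => and_congr_right fun hi => by rw [h i hi]

theorem rankBound_succ (i : Fin n) (q : ℕ) :
    rankBound n w (i + 1) q = rankBound n w i q + if (w i).val < q then 1 else 0 := by
  unfold rankBound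
  split_ifs with h
  · rw [← card_insert_of_notMem (s := univ.filter _) (a := i) (by simp)]
    congr 1
    ext j
    simp only [mem_filter, mem_univ, true_and, mem_insert]
    grind
  · rw [add_zero]
    congr 1
    ext j
    simp only [mem_filter, mem_univ, true_and]
    grind

theorem rankBound_add_card_filter_le {p : ℕ} (hp : p ≤ n) (q : ℕ) :
    rankBound n w p q + #{i | i.val < p ∧ q ≤ (w i).val} = p := by
  conv_rhs => rw [← min_eq_right hp, ← Fin.card_filter_val_lt,
    ← card_filter_add_card_filter_not (p := fun i => (w i).val < q)]
  simp only [rankBound, filter_filter, not_lt]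

theorem rankBound_eq_add_card_filter (p : ℕ) {q' q : ℕ} (hq : q' ≤ q) :
    rankBound n w p q =
      rankBound n w p q' + #{i | i.val < p ∧ q' ≤ (w i).val ∧ (w i).val < q} := by
  rw [rankBound, rankBound, ← card_filter_add_card_filter_not
    (s := univ.filter fun i : Fin n => i.val < p ∧ (w i).val < q) (p := fun i => (w i).val < q')]
  simp only [filter_filter]
  congr 1 <;> congr 1 <;> ext i <;> simp only [mem_filter, mem_univ, true_and] <;> omega

theorem card_filter_sub_lt_eq (p r : ℕ) :
    #{i | i.val < p ∧ n - 1 - (w i).val < r} = #{i | i.val < p ∧ n - r ≤ (w i).val} := by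
  congr 1
  exact filter_congr fun i _ => by have := (w i).isLt; omega

theorem rankBound_mul_swap {a b : Fin n} (hab : a < b) (hw : w b < w a) (p q : ℕ) :
    rankBound n (w * swap a b) p q = rankBound n w p q +
      if a.val < p ∧ p ≤ b.val ∧ (w b).val < q ∧ q ≤ (w a).val then 1 else 0 := by
  have key : (rankBound n (w * swap a b) p q : ℤ) - rankBound n w p q =
      ((if a.val < p ∧ (w b).val < q then 1 else 0) -
        (if a.val < p ∧ (w a).val < q then 1 else 0)) +
      ((if b.val < p ∧ (w a).val < q then 1 else 0) -
        (if b.val < p ∧ (w b).val < q then 1 else 0)) := by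
    simp only [rankBound, card_filter, Nat.cast_sum, ← sum_sub_distrib]
    rw [Fintype.sum_eq_add a b hab.ne]
    · simp [swap_apply_left, swap_apply_right]
    · rintro i ⟨hia, hib⟩
      simp [swap_apply_of_ne_of_ne hia hib]
  have : a.val < b.val := hab
  have : (w b).val < (w a).val := hw
  split_ifs at key ⊢ <;> omega

end Rank

section Inversions

variable {n : ℕ}

def inversions (w : Perm (Fin n)) : Finset (Fin n × Fin n) :=
  univ.filter fun x => x.1 < x.2 ∧ w x.2 < w x.1

theorem mem_inversions {w : Perm (Fin n)} {x : Fin n × Fin n} :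
    x ∈ inversions w ↔ x.1 < x.2 ∧ w x.2 < w x.1 := by
  simp [inversions]

theorem invCount_eq_card_inversions (w : Perm (Fin n)) : invCount n w = #(inversions w) := rfl

theorem swap_apply_lt_swap_apply_or {a b i j : Fin n} (hab : a < b) (hij : i < j) :
    swap a b i < swap a b j ∨ (i = a ∧ a < j ∧ j ≤ b) ∨ (a < i ∧ i < b ∧ j = b) := by
  simp only [swap_apply_def, Fin.lt_def, Fin.le_def, Fin.ext_iff] at *
  split_ifs <;> omega

theorem invCount_mul_swap_lt (w : Perm (Fin n)) {a b : Fin n} (hab : a < b)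
    (hw : w b < w a) : invCount n (w * swap a b) < invCount n w := by
  set σ := swap a b
  have hσσ : ∀ i, σ (σ i) = i := swap_apply_self a b
  -- An injection of the inversions of `w * σ` into those of `w` other than `(a, b)`.
  let φ : Fin n × Fin n → Fin n × Fin n := fun x =>
    if σ x.1 < σ x.2 then (σ x.1, σ x.2) else x
  have hmaps : ∀ x ∈ inversions (w * σ), φ x ∈ (inversions w).erase (a, b) := by
    rintro ⟨i, j⟩ hx
    rw [mem_inversions] at hx
    obtain ⟨hij, hinv⟩ := hx
    dsimp only at hij
    simp only [Perm.mul_apply] at hinv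
    simp only [φ]
    split_ifs with hσ <;> simp only [mem_erase, mem_inversions, ne_eq, Prod.mk.injEq]
    · refine ⟨fun ⟨h1, h2⟩ => ?_, hσ, hinv⟩
      rw [← hσσ i, ← hσσ j, h1, h2, swap_apply_left, swap_apply_right] at hij
      exact lt_asymm hij hab
    obtain hσ' | ⟨rfl, haj, hjb⟩ | ⟨hai, hib, rfl⟩ := swap_apply_lt_swap_apply_or hab hij
    · exact absurd hσ' hσ
    · rcases eq_or_ne j b with rfl | hjb'
      · simp only [σ, swap_apply_left, swap_apply_right] at hinv
        exact absurd hw (lt_asymm hinv)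
      · rw [swap_apply_of_ne_of_ne haj.ne' hjb', swap_apply_left] at hinv
        exact ⟨fun h => hjb' h.2, haj, hinv.trans hw⟩
    · rw [swap_apply_right, swap_apply_of_ne_of_ne hai.ne' hib.ne] at hinv
      exact ⟨fun h => hai.ne' h.1, hij, hw.trans hinv⟩
  have hinj : Set.InjOn φ (inversions (w * σ)) := by
    rintro ⟨i, j⟩ hx ⟨k, l⟩ hy hφ
    rw [mem_coe, mem_inversions] at hx hy
    simp only [φ] at hφ
    split_ifs at hφ with h1 h2 h2 <;> simp only [Prod.mk.injEq] at hφ ⊢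
    · exact ⟨σ.injective hφ.1, σ.injective hφ.2⟩
    · rw [← hφ.1, ← hφ.2, hσσ, hσσ] at h2
      exact absurd hx.1 h2
    · rw [hφ.1, hφ.2, hσσ, hσσ] at h1
      exact absurd hy.1 h1
    · exact hφ
  have hab_mem : (a, b) ∈ inversions w := mem_inversions.mpr ⟨hab, hw⟩
  rw [invCount_eq_card_inversions, invCount_eq_card_inversions]
  calc #(inversions (w * σ)) ≤ #((inversions w).erase (a, b)) :=
        card_le_card_of_injOn φ hmaps hinj
    _ < #(inversions w) := card_erase_lt_of_mem hab_mem

end Inversions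

section Bruhat

variable {n : ℕ}

/-- The rank-matrix characterization of the Bruhat order `v ≤ w`. -/
def BruhatLE (n : ℕ) (v w : Perm (Fin n)) : Prop :=
  ∀ p ≤ n, ∀ q ≤ n, rankBound n w p q ≤ rankBound n v p q

variable {v w : Perm (Fin n)}

theorem BruhatLE.le_of_eqOn (h : BruhatLE n v w) {a : Fin n} (hagree : ∀ i < a, w i = v i) :
    v a ≤ w a := by
  have hrank := h (a + 1) a.isLt (w a + 1) (w a).isLt
  rw [rankBound_succ, rankBound_succ, rankBound_congr w hagree] at hrank
  rw [Fin.le_def]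
  split_ifs at hrank <;> omega

theorem BruhatLE.rankBound_lt (h : BruhatLE n v w) {a : Fin n} (hagree : ∀ i < a, w i = v i)
    {p q : ℕ} (hp : p ≤ n) (hap : a.val < p) (hvq : (v a).val < q) (hqw : q ≤ (w a).val)
    (hgap : ∀ c, a < c → c.val < p → ¬(v a ≤ w c ∧ w c < w a)) :
    rankBound n w p q < rankBound n v p q := by
  rw [rankBound_eq_add_card_filter w p hvq.le, rankBound_eq_add_card_filter v p hvq.le]
  -- Below `p`, `w` takes values in `[v a, q)` only before `a`, where it agrees with `v`.
  have hsub : #{i | i.val < p ∧ (v a).val ≤ (w i).val ∧ (w i).val < q} <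
      #{i | i.val < p ∧ (v a).val ≤ (v i).val ∧ (v i).val < q} := by
    refine card_lt_card ((ssubset_iff_of_subset fun i => ?_).mpr ⟨a, ?_, ?_⟩)
    · simp only [mem_filter, mem_univ, true_and]
      rintro ⟨hip, hvw, hwq⟩
      rcases lt_trichotomy i a with hia | rfl | hai
      · rw [← hagree i hia]
        exact ⟨hip, hvw, hwq⟩
      · omega
      · exact absurd ⟨hvw, by omega⟩ (hgap i hai hip)
    · simp [hap, hvq]
    · simp only [mem_filter, mem_univ, true_and, not_and, not_lt]
      exact fun _ _ => hqw
  have := h p hp (v a) (v a).isLt.le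
  omega

theorem BruhatLE.exists_mul_swap (h : BruhatLE n v w) (hne : w ≠ v) :
    ∃ a b, a < b ∧ w b < w a ∧ BruhatLE n v (w * swap a b) := by
  obtain ⟨a, hwa, hmin⟩ := wellFounded_lt.has_min {i | w i ≠ v i}
    (not_forall.mp fun hall => hne (Equiv.ext hall))
  have hagree : ∀ i < a, w i = v i := fun i hi => not_not.mp fun hi' => hmin i hi' hi
  have hva : v a < w a := (h.le_of_eqOn hagree).lt_of_ne (Ne.symm hwa)
  have hstart : a < w.symm (v a) := by
    rcases lt_trichotomy (w.symm (v a)) a with hlt | heq | hgt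
    · have := hagree _ hlt
      rw [w.apply_symm_apply, eq_comm, v.apply_eq_iff_eq] at this
      rw [this] at hlt
      exact absurd hlt (lt_irrefl a)
    · have := w.apply_symm_apply (v a)
      rw [heq] at this
      exact absurd this hwa
    · exact hgt
  obtain ⟨b, ⟨hab, hvb, hbw⟩, hbmin⟩ := wellFounded_lt.has_min
    {j | a < j ∧ v a ≤ w j ∧ w j < w a}
    ⟨w.symm (v a), hstart, by simp, by simpa using hva⟩
  refine ⟨a, b, hab, hbw, fun p hp q hq => ?_⟩
  rw [rankBound_mul_swap w hab hbw]
  split_ifs with hrect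
  · obtain ⟨hap, hpb, hbq, hqa⟩ := hrect
    refine Nat.succ_le_of_lt (h.rankBound_lt hagree hp hap ?_ hqa fun c hac hcp hc => ?_)
    · exact lt_of_le_of_lt (Fin.le_def.mp hvb) hbq
    · exact hbmin c ⟨hac, hc⟩ (Fin.lt_def.mpr (by omega))
  · exact h p hp q hq

theorem BruhatLE.invCount_lt (h : BruhatLE n v w) (hne : w ≠ v) :
    invCount n v < invCount n w := by
  induction hk : invCount n w using Nat.strong_induction_on generalizing w with
  | _ k ih =>
    obtain ⟨a, b, hab, hba, h'⟩ := h.exists_mul_swap hne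
    have hlt := hk ▸ invCount_mul_swap_lt w hab hba
    rcases eq_or_ne (w * swap a b) v with heq | hne'
    · rwa [← heq]
    · exact (ih _ hlt h' hne' rfl).trans hlt

end Bruhat

theorem finrank_inf_add_finrank_inf_le {K V : Type*} [DivisionRing K] [AddCommGroup V]
    [Module K V] [FiniteDimensional K V] (W A B : Submodule K V) :
    Module.finrank K ↥(W ⊓ A) + Module.finrank K ↥(W ⊓ B) ≤
      Module.finrank K W + Module.finrank K ↥(W ⊓ (A ⊓ B)) := by
  rw [← Submodule.finrank_sup_add_finrank_inf_eq, inf_inf_inf_comm, inf_idem]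
  exact Nat.add_le_add_right (Submodule.finrank_mono (sup_le inf_le_left inf_le_left)) _

section Flags

variable {n : ℕ}

theorem stdFlag_eq_coordSpan (q : ℕ) :
    stdFlag n q = coordSpan ℂ {j : Fin n | n - q ≤ j.val} :=
  rfl

theorem oppFlag_eq_coordSpan (q : ℕ) : oppFlag n q = coordSpan ℂ {j : Fin n | j.val < q} :=
  rfl

theorem stdFlag_inf_oppFlag (q r : ℕ) :
    stdFlag n q ⊓ oppFlag n r = coordSpan ℂ {j : Fin n | n - q ≤ j.val ∧ j.val < r} :=
  by rw [stdFlag_eq_coordSpan, oppFlag_eq_coordSpan, coordSpan_inf]; rfl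

theorem stdFlag_inf_oppFlag_sub (q : ℕ) : stdFlag n q ⊓ oppFlag n (n - q) = ⊥ := by
  rw [stdFlag_inf_oppFlag, ← coordSpan_empty]
  congr 1
  ext j
  simp only [Set.mem_ofPred_eq, Set.mem_empty_iff_false, iff_false]
  omega

theorem stdFlag_inf_oppFlag_succ (c : Fin n) :
    stdFlag n (c + 1) ⊓ oppFlag n (n - c) = ℂ ∙ stdBasisVec n c.rev := by
  rw [stdFlag_inf_oppFlag, stdBasisVec, ← coordSpan_singleton]
  congr 1
  ext j
  simp only [Set.mem_ofPred_eq, Set.mem_singleton_iff, Fin.ext_iff, Fin.val_rev]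
  omega

variable {V : ℕ → Submodule ℂ (Fin n → ℂ)} {v w : Perm (Fin n)}

theorem bruhatLE_of_mem_inter (hV : IsCompleteFlag n V) (hX : inSchubX n w V)
    (hY : inSchubY n v V) : BruhatLE n v w := by
  intro p hp q hq
  have hdim := finrank_inf_add_finrank_inf_le (V p) (stdFlag n q) (oppFlag n (n - q))
  rw [stdFlag_inf_oppFlag_sub, inf_bot_eq, finrank_bot, hV.2.1 p hp] at hdim
  have hy := hY p (n - q) hp (Nat.sub_le n q)
  rw [card_filter_sub_lt_eq, Nat.sub_sub_self hq] at hy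
  have := hX p q hp hq
  have := rankBound_add_card_filter_le v hp q
  omega

theorem stdBasisVec_rev_apply_mem (hV : IsCompleteFlag n V) (hX : inSchubX n w V)
    (hY : inSchubY n w V) {p : ℕ} (hp : p ≤ n) {i : Fin n} (hi : i.val < p) :
    stdBasisVec n (w i).rev ∈ V p := by
  have hdim := finrank_inf_add_finrank_inf_le (V p) (stdFlag n (w i + 1)) (oppFlag n (n - w i))
  rw [stdFlag_inf_oppFlag_succ, hV.2.1 p hp] at hdim
  have hx := hX p (w i + 1) hp (w i).isLt
  have hy := hY p (n - w i) hp (Nat.sub_le _ _)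
  rw [card_filter_sub_lt_eq, Nat.sub_sub_self (w i).isLt.le] at hy
  -- The two bounds add up to `p + 1`: position `i` is counted by both.
  have hstrip : #{j | j.val < p ∧ (w i).val ≤ (w j).val ∧ (w j).val < w i + 1} = 1 := by
    rw [card_eq_one]
    refine ⟨i, ext fun j => ?_⟩
    simp only [mem_filter, mem_univ, true_and, mem_singleton]
    refine ⟨fun ⟨_, h1, h2⟩ => w.injective (Fin.ext (by omega)), fun hj => ?_⟩
    subst hj
    exact ⟨hi, le_rfl, by omega⟩
  have := rankBound_eq_add_card_filter w p (Nat.le_add_right (w i) 1)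
  have := rankBound_add_card_filter_le w hp (w i)
  by_contra hmem
  rw [(Submodule.disjoint_span_singleton.mpr fun h => absurd h hmem).eq_bot, finrank_bot] at hdim
  omega

end Flags

section PermFlag

variable {n : ℕ}

/-- The coordinate flag `V_p = span(u_{n+1-w(1)}, …, u_{n+1-w(p)})`. -/
noncomputable def permFlag (w : Perm (Fin n)) (p : ℕ) : Submodule ℂ (Fin n → ℂ) :=
  coordSpan ℂ ((fun i => (w i).rev) '' {i | i.val < p})

variable (w : Perm (Fin n))

theorem rev_comp_injective : Function.Injective fun i => (w i).rev :=
  Fin.rev_injective.comp w.injective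

theorem finrank_permFlag_inf_coordSpan (p : ℕ) (T : Set (Fin n)) [DecidablePred (· ∈ T)] :
    Module.finrank ℂ ↥(permFlag w p ⊓ coordSpan ℂ T) =
      #{i | i.val < p ∧ (w i).rev ∈ T} := by
  have hset : (fun i => (w i).rev) '' {i | i.val < p} ∩ T =
      ↑((univ.filter fun i : Fin n => i.val < p ∧ (w i).rev ∈ T).image
        fun i => (w i).rev) := by
    ext j
    simp only [Set.mem_inter_iff, Set.mem_image, Set.mem_ofPred_eq, coe_image, coe_filter,
      mem_univ, true_and]
    grind
  rw [permFlag, coordSpan_inf, hset, finrank_coordSpan,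
    card_image_of_injective _ (rev_comp_injective w)]

theorem finrank_permFlag {p : ℕ} (hp : p ≤ n) : Module.finrank ℂ ↥(permFlag w p) = p := by
  have := finrank_permFlag_inf_coordSpan w p Set.univ
  rw [coordSpan_univ, inf_top_eq] at this
  simpa [Fin.card_filter_val_lt, hp] using this

theorem permFlag_isCompleteFlag : IsCompleteFlag n (permFlag w) := by
  refine ⟨fun p p' hpp' => coordSpan_mono (Set.image_mono fun i (hi : i.val < p) =>
    hi.trans_le hpp'), fun p hp => finrank_permFlag w hp, fun p hp => ?_⟩
  rw [permFlag, ← coordSpan_univ]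
  congr 1
  exact Set.eq_univ_of_forall fun j => ⟨w.symm j.rev, (w.symm j.rev).isLt.trans_le hp, by simp⟩

theorem permFlag_mem_inSchubX : inSchubX n w (permFlag w) := by
  intro p q _ _
  rw [stdFlag_eq_coordSpan, finrank_permFlag_inf_coordSpan, rankBound]
  refine card_le_card fun i => ?_
  simp only [mem_filter, mem_univ, true_and, Set.mem_ofPred_eq, Fin.val_rev]
  omega

theorem permFlag_mem_inSchubY : inSchubY n w (permFlag w) := by
  intro p q _ _
  rw [oppFlag_eq_coordSpan, finrank_permFlag_inf_coordSpan]
  refine card_le_card fun i => ?_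
  simp only [mem_filter, mem_univ, true_and, Set.mem_ofPred_eq, Fin.val_rev]
  omega

theorem eq_permFlag {V : ℕ → Submodule ℂ (Fin n → ℂ)} (hV : IsCompleteFlag n V)
    (hX : inSchubX n w V) (hY : inSchubY n w V) : V = permFlag w := by
  funext p
  rcases le_or_gt p n with hp | hp
  · refine (Submodule.eq_of_le_of_finrank_le ?_ (by rw [hV.2.1 p hp, finrank_permFlag w hp])).symm
    rw [permFlag, coordSpan, Submodule.span_le]
    rintro _ ⟨_, ⟨i, hi, rfl⟩, rfl⟩
    exact stdBasisVec_rev_apply_mem hV hX hY hp hi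
  · rw [hV.2.2 p hp.le, (permFlag_isCompleteFlag w).2.2 p hp.le]

end PermFlag

theorem flag_duality_general (n : ℕ) (w v : Equiv.Perm (Fin n)) :
    ((invCount n w = invCount n v → w ≠ v →
      ¬ ∃ V, IsCompleteFlag n V ∧ inSchubX n w V ∧ inSchubY n v V)) ∧
    (∃! V, IsCompleteFlag n V ∧ inSchubX n w V ∧ inSchubY n w V) ∧
    ((invCount n w < invCount n v →
      ¬ ∃ V, IsCompleteFlag n V ∧ inSchubX n w V ∧ inSchubY n v V)) := by
  refine ⟨?_, ⟨permFlag w, ⟨permFlag_isCompleteFlag w, permFlag_mem_inSchubX w,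
    permFlag_mem_inSchubY w⟩, fun V ⟨hV, hX, hY⟩ => eq_permFlag w hV hX hY⟩, ?_⟩
  · rintro heq hne ⟨V, hV, hX, hY⟩
    have := (bruhatLE_of_mem_inter hV hX hY).invCount_lt hne
    omega
  · rintro hlt ⟨V, hV, hX, hY⟩
    rcases eq_or_ne w v with rfl | hne
    · exact lt_irrefl _ hlt
    · have := (bruhatLE_of_mem_inter hV hX hY).invCount_lt hne
      omega

/-- Duality theorem for the flag variety: (a) if `inv(w) = inv(v)` and `w ≠ v` then
`X_w ∩ Y_v = ∅`; (b) `X_w ∩ Y_w` contains exactly one flag; (c) if `inv(w) < inv(v)`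
then `X_w ∩ Y_v = ∅`. -/
theorem flag_duality (n : ℕ) (hn : 0 < n) (w v : Equiv.Perm (Fin n)) :
    ((invCount n w = invCount n v → w ≠ v →
      ¬ ∃ V, IsCompleteFlag n V ∧ inSchubX n w V ∧ inSchubY n v V)) ∧
    (∃! V, IsCompleteFlag n V ∧ inSchubX n w V ∧ inSchubY n w V) ∧
    ((invCount n w < invCount n v →
      ¬ ∃ V, IsCompleteFlag n V ∧ inSchubX n w V ∧ inSchubY n v V)) :=
  flag_duality_general n w v
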